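/- For the bipartite reduced SRPE state with the roles of Alice and Bob exchanged (so a and b are swapped in F), the steering criterion F'/t⊥ < 2 for Bob steering Alice holds if and only if n < (3+√5)/2; in particular the condition is independent of α. -/

import Mathlib

open Matrix
open scoped Matrix Kronecker ComplexOrder

noncomputable section

/-- Index type for a two-qubit system. -/
abbrev Q2 := Fin 2 × Fin 2

/-- Pauli matrices. -/
def σx : Matrix (Fin 2) (Fin 2) ℂ := !![0, 1; 1, 0]
def σy : Matrix (Fin 2) (Fin 2) ℂ := !![0, -Complex.I; Complex.I, 0]
def σz : Matrix (Fin 2) (Fin 2) ℂ := !![1, 0; 0, -1]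

/-- The vector `|Ψ_α⟩ = √(1-α)|00⟩ + √α|11⟩`. -/
def ketPsi (α : ℝ) : Q2 → ℂ := fun i =>
  if i = (0, 0) then (Real.sqrt (1 - α) : ℂ)
  else if i = (1, 1) then (Real.sqrt α : ℂ) else 0

/-- The entangled two-qubit state `ρ_α = |Ψ_α⟩⟨Ψ_α|`. -/
def rhoAlpha (α : ℝ) : Matrix Q2 Q2 ℂ :=
  Matrix.of fun i j => ketPsi α i * star (ketPsi α j)

/-- The single-qubit state `diag(1-α, α)`. -/
def rho1 (α : ℝ) : Matrix (Fin 2) (Fin 2) ℂ := !![(1 - α : ℂ), 0; 0, (α : ℂ)]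

/-- The single-qubit pure state `|0⟩⟨0|`. -/
def rho0 : Matrix (Fin 2) (Fin 2) ℂ := !![1, 0; 0, 0]

/-- Partial trace over the first (Alice's) qubit. -/
def ptrA (ρ : Matrix Q2 Q2 ℂ) : Matrix (Fin 2) (Fin 2) ℂ :=
  Matrix.of fun i j => ∑ k : Fin 2, ρ (k, i) (k, j)

/-- Partial trace over the second (Bob's) qubit. -/
def ptrB (ρ : Matrix Q2 Q2 ℂ) : Matrix (Fin 2) (Fin 2) ℂ :=
  Matrix.of fun i j => ∑ k : Fin 2, ρ (i, k) (j, k)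

/-- Pauli expectation value `Tr[ρ (A ⊗ B)]` (real part). -/
def pauliExp (ρ : Matrix Q2 Q2 ℂ) (A B : Matrix (Fin 2) (Fin 2) ℂ) : ℝ :=
  (Matrix.trace (ρ * (A ⊗ₖ B))).re

def blochA (ρ : Matrix Q2 Q2 ℂ) : ℝ := pauliExp ρ σz 1
def blochB (ρ : Matrix Q2 Q2 ℂ) : ℝ := pauliExp ρ 1 σz
def corrX (ρ : Matrix Q2 Q2 ℂ) : ℝ := pauliExp ρ σx σx
def corrY (ρ : Matrix Q2 Q2 ℂ) : ℝ := pauliExp ρ σy σy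
def corrZ (ρ : Matrix Q2 Q2 ℂ) : ℝ := pauliExp ρ σz σz

/-- The quantity `F = √((1+a)² − (b+t_z)²) + √((1-a)² − (b−t_z)²)` for a state `ρ`. -/
def Fq (ρ : Matrix Q2 Q2 ℂ) : ℝ :=
  Real.sqrt ((1 + blochA ρ)^2 - (blochB ρ + corrZ ρ)^2)
    + Real.sqrt ((1 - blochA ρ)^2 - (blochB ρ - corrZ ρ)^2)

/-- The concurrence of a two-qubit X-state, via the formula
`C(𝒳) = 2·max{0, |𝒳₂₃| − √(𝒳₁₁𝒳₄₄), |𝒳₁₄| − √(𝒳₂₂𝒳₃₃)}`. -/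
def concX (ρ : Matrix Q2 Q2 ℂ) : ℝ :=
  2 * max 0 (max
    (‖ρ (0, 1) (1, 0)‖ -
      Real.sqrt ((ρ (0, 0) (0, 0)).re * (ρ (1, 1) (1, 1)).re))
    (‖ρ (0, 0) (1, 1)‖ -
      Real.sqrt ((ρ (0, 1) (0, 1)).re * (ρ (1, 0) (1, 0)).re)))

/-- The bipartite reduced SRPE state (real parameter `n`). -/
def srpeR (α n : ℝ) : Matrix Q2 Q2 ℂ :=
  (((1 / (n - 1) : ℝ)) : ℂ) • rhoAlpha α
    + ((((n - 2) / (n - 1) : ℝ)) : ℂ) • (rho1 α ⊗ₖ rho0)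

/-- The quantity `F` with the roles of Alice and Bob exchanged (`a ↔ b`). -/
def Fq' (ρ : Matrix Q2 Q2 ℂ) : ℝ :=
  Real.sqrt ((1 + blochB ρ)^2 - (blochA ρ + corrZ ρ)^2)
    + Real.sqrt ((1 - blochB ρ)^2 - (blochA ρ - corrZ ρ)^2)


section Aux

variable (α n : ℝ)

lemma blochA_srpe (hn : 2 ≤ n) (h0 : 0 < α) (h1 : α < 1/2) :
    blochA (srpeR α n) = 1 - 2*α := by
  have hne : n - 1 ≠ 0 := by linarith
  have e1 : ((n:ℂ)-2)/((n:ℂ)-1) = (((n-2)/(n-1):ℝ):ℂ) := by push_cast; ring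
  have e2 : ((n:ℂ)-1) = (((n-1):ℝ):ℂ) := by push_cast; ring
  have s1 : Real.sqrt (1-α) * Real.sqrt (1-α) = 1-α := Real.mul_self_sqrt (by linarith)
  have s2 : Real.sqrt α * Real.sqrt α = α := Real.mul_self_sqrt h0.le
  simp only [blochA]
  simp [pauliExp, srpeR, rhoAlpha, rho1, rho0, ketPsi, σz, Matrix.trace, Matrix.mul_apply,
    Fintype.sum_prod_type, Fin.sum_univ_two, Matrix.kroneckerMap_apply, Matrix.one_apply]
  rw [e1, e2, Complex.ofReal_re, Complex.normSq_ofReal, s1, s2]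
  field_simp
  ring

lemma blochB_srpe (hn : 2 ≤ n) (h0 : 0 < α) (h1 : α < 1/2) :
    blochB (srpeR α n) = 1 - 2*α/(n-1) := by
  have hne : n - 1 ≠ 0 := by linarith
  have e1 : ((n:ℂ)-2)/((n:ℂ)-1) = (((n-2)/(n-1):ℝ):ℂ) := by push_cast; ring
  have e2 : ((n:ℂ)-1) = (((n-1):ℝ):ℂ) := by push_cast; ring
  have s1 : Real.sqrt (1-α) * Real.sqrt (1-α) = 1-α := Real.mul_self_sqrt (by linarith)
  have s2 : Real.sqrt α * Real.sqrt α = α := Real.mul_self_sqrt h0.le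
  simp only [blochB]
  simp [pauliExp, srpeR, rhoAlpha, rho1, rho0, ketPsi, σz, Matrix.trace, Matrix.mul_apply,
    Fintype.sum_prod_type, Fin.sum_univ_two, Matrix.kroneckerMap_apply, Matrix.one_apply]
  rw [e1, e2, Complex.ofReal_re, Complex.normSq_ofReal, s1, s2]
  field_simp
  ring

lemma corrZ_srpe (hn : 2 ≤ n) (h0 : 0 < α) (h1 : α < 1/2) :
    corrZ (srpeR α n) = 1 - 2*α*(n-2)/(n-1) := by
  have hne : n - 1 ≠ 0 := by linarith
  have e1 : ((n:ℂ)-2)/((n:ℂ)-1) = (((n-2)/(n-1):ℝ):ℂ) := by push_cast; ring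
  have e2 : ((n:ℂ)-1) = (((n-1):ℝ):ℂ) := by push_cast; ring
  have s1 : Real.sqrt (1-α) * Real.sqrt (1-α) = 1-α := Real.mul_self_sqrt (by linarith)
  have s2 : Real.sqrt α * Real.sqrt α = α := Real.mul_self_sqrt h0.le
  simp only [corrZ]
  simp [pauliExp, srpeR, rhoAlpha, rho1, rho0, ketPsi, σz, Matrix.trace, Matrix.mul_apply,
    Fintype.sum_prod_type, Fin.sum_univ_two, Matrix.kroneckerMap_apply, Matrix.one_apply]
  rw [e1, e2, Complex.ofReal_re, Complex.normSq_ofReal, s1, s2]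
  field_simp
  ring

lemma corrX_srpe (hn : 2 ≤ n) (h0 : 0 < α) (h1 : α < 1/2) :
    corrX (srpeR α n) = 2*Real.sqrt (α*(1-α))/(n-1) := by
  have hne : n - 1 ≠ 0 := by linarith
  have e2 : ((n:ℂ)-1) = (((n-1):ℝ):ℂ) := by push_cast; ring
  have s3 : Real.sqrt (α*(1-α)) = Real.sqrt α * Real.sqrt (1-α) := Real.sqrt_mul h0.le _
  simp only [corrX]
  simp [pauliExp, srpeR, rhoAlpha, rho1, rho0, ketPsi, σx, Matrix.trace, Matrix.mul_apply,
    Fintype.sum_prod_type, Fin.sum_univ_two, Matrix.kroneckerMap_apply, Matrix.one_apply]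
  rw [e2, Complex.normSq_ofReal, s3]
  field_simp
  ring

end Aux

/-- For the SRPE reduced state with Alice and Bob exchanged, `F'/t⊥ < 2` iff
`n < (3+√5)/2`, independently of `α`. -/
theorem stmt11 (n : ℝ) (hn : 2 ≤ n) (α : ℝ) (hα : α ∈ Set.Ioo 0 (1/2 : ℝ)) :
    Fq' (srpeR α n) / |corrX (srpeR α n)| < 2 ↔ n < (3 + Real.sqrt 5) / 2 := by
  obtain ⟨h0, h1⟩ := hα
  have hne : n - 1 ≠ 0 := by linarith
  have hn1 : (0:ℝ) < n - 1 := by linarith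
  have hA : 0 < α * (1 - α) := by nlinarith
  set s := Real.sqrt (α * (1 - α)) with hs
  have hspos : 0 < s := Real.sqrt_pos.mpr hA
  have hs2 : s ^ 2 = α * (1 - α) := Real.sq_sqrt hA.le
  set t := Real.sqrt ((n - 2) * (n - 1)) with ht
  have hK : 0 ≤ (n - 2) * (n - 1) := by nlinarith
  have ht2 : t ^ 2 = (n - 2) * (n - 1) := Real.sq_sqrt hK
  have htnn : 0 ≤ t := Real.sqrt_nonneg _
  rw [corrX_srpe α n hn h0 h1]
  have habs : |2 * s / (n - 1)| = 2 * s / (n - 1) := abs_of_pos (by positivity)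
  have hFq : Fq' (srpeR α n) = 4 * s * t / (n - 1) := by
    rw [Fq', blochA_srpe α n hn h0 h1, blochB_srpe α n hn h0 h1, corrZ_srpe α n hn h0 h1]
    have e2 : (1 - (1 - 2*α/(n-1)))^2 - ((1 - 2*α) - (1 - 2*α*(n-2)/(n-1)))^2 = 0 := by
      field_simp
      ring
    have e1 : (1 + (1 - 2*α/(n-1)))^2 - ((1 - 2*α) + (1 - 2*α*(n-2)/(n-1)))^2
        = (4 * s * t / (n - 1))^2 := by
      rw [div_pow, mul_pow, mul_pow, hs2, ht2]
      field_simp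
      ring
    rw [e1, e2, Real.sqrt_zero, Real.sqrt_sq (by positivity), add_zero]
  rw [hFq, habs]
  have hdiv : 4 * s * t / (n - 1) / (2 * s / (n - 1)) = 2 * t := by
    field_simp
    ring
  rw [hdiv]
  have h5 : Real.sqrt 5 ^ 2 = 5 := Real.sq_sqrt (by norm_num)
  have hx : (0:ℝ) ≤ 2 * n - 3 := by linarith
  constructor
  · intro h
    have htlt : t < 1 := by linarith
    have hKlt : (n - 2) * (n - 1) < 1 := by nlinarith
    have := (Real.lt_sqrt hx).mpr (by nlinarith : (2*n-3)^2 < 5)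
    linarith
  · intro h
    have h2 : 2 * n - 3 < Real.sqrt 5 := by linarith
    have h3 : (2*n-3)^2 < 5 := (Real.lt_sqrt hx).mp h2
    have hKlt : (n - 2) * (n - 1) < 1 := by nlinarith
    have : t < 1 := by nlinarith
    linarith


end
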